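/- arXiv:2512.12016 — 3 statements merged into one kernel-verified Lean document; each statement's English description precedes it below -/
import Mathlib

section
/- Let x₁, x₂, …, x_n be nonnegative real numbers with x₁ = 0 and |x_i - x_{i+1}| ≤ 1 for all i ∈ {1,…,n-1}. Let S = Σ_{t=1}^n x_t and let D satisfy D^p = Σ_{t=1}^n x_t^p for some real p ≥ 2. Then D ≤ 2^((p-1)/(2p)) · S^((p+1)/(2p)). -/
theorem power_sum_bound (n : ℕ) (x : ℕ → ℝ)
    (hx0 : ∀ i ∈ Finset.Icc 1 n, 0 ≤ x i)
    (hx1 : x 1 = 0)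
    (hstep : ∀ i, 1 ≤ i → i ≤ n - 1 → |x i - x (i + 1)| ≤ 1)
    (p : ℝ) (hp : 2 ≤ p)
    (S D : ℝ) (hS : S = ∑ t ∈ Finset.Icc 1 n, x t)
    (hD0 : 0 ≤ D) (hD : D ^ p = ∑ t ∈ Finset.Icc 1 n, (x t) ^ p) :
    D ≤ 2 ^ ((p - 1) / (2 * p)) * S ^ ((p + 1) / (2 * p)) := by
  have hp0 : (0:ℝ) < p := by linarith
  have hS0 : 0 ≤ S := by
    rw [hS]; exact Finset.sum_nonneg hx0
  -- key lemma: partial sums dominate squares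
  have key : ∀ t, 1 ≤ t → t ≤ n → x t ^ 2 ≤ 2 * ∑ i ∈ Finset.Icc 1 t, x i := by
    intro t
    induction t with
    | zero => intro h; omega
    | succ m ih =>
      intro h1 h2
      rcases Nat.lt_or_ge 1 (m + 1) with h | h
      · have hm1 : 1 ≤ m := by omega
        have hmn : m ≤ n := by omega
        have ihm := ih hm1 hmn
        have hst := hstep m hm1 (by omega)
        have habs := abs_le.mp hst
        have hxm : 0 ≤ x m := hx0 m (Finset.mem_Icc.mpr ⟨hm1, hmn⟩)
        have hxm1 : 0 ≤ x (m + 1) := hx0 (m + 1) (Finset.mem_Icc.mpr ⟨by omega, h2⟩)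
        rw [Finset.sum_Icc_succ_top (by omega : 1 ≤ m + 1)]
        nlinarith [mul_nonneg (by linarith : (0:ℝ) ≤ 1 - (x (m+1) - x m)) hxm1,
          sq_nonneg (x (m+1) - x m)]
      · have hm0 : m = 0 := by omega
        subst hm0
        simp [hx1]
  have key2 : ∀ t ∈ Finset.Icc 1 n, x t ^ 2 ≤ 2 * S := by
    intro t ht
    obtain ⟨h1, h2⟩ := Finset.mem_Icc.mp ht
    refine (key t h1 h2).trans ?_
    have : ∑ i ∈ Finset.Icc 1 t, x i ≤ S := by
      rw [hS]
      refine Finset.sum_le_sum_of_subset_of_nonneg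
        (Finset.Icc_subset_Icc_right h2) ?_
      intro i hi _; exact hx0 i hi
    linarith
  -- bound on D^p
  have hbound : D ^ p ≤ 2 ^ ((p - 1) / 2) * S ^ ((p + 1) / 2) := by
    rw [hD]
    have hterm : ∀ t ∈ Finset.Icc 1 n, x t ^ p ≤ x t * (2 * S) ^ ((p - 1) / 2) := by
      intro t ht
      have hx : 0 ≤ x t := hx0 t ht
      have e1 : x t ^ p = x t * x t ^ (p - 1) := by
        calc x t ^ p = x t ^ (1 + (p - 1)) := by ring_nf
          _ = x t ^ (1:ℝ) * x t ^ (p - 1) := Real.rpow_add' hx (by intro h; nlinarith)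
          _ = x t * x t ^ (p - 1) := by rw [Real.rpow_one]
      have e2 : x t ^ ((p - 1):ℝ) = (x t ^ (2:ℝ)) ^ ((p - 1) / 2) := by
        rw [← Real.rpow_mul hx]
        congr 1; ring
      have h2S : x t ^ (2:ℝ) ≤ 2 * S := by
        rw [Real.rpow_two]; exact key2 t ht
      have e3 : x t ^ ((p - 1):ℝ) ≤ (2 * S) ^ ((p - 1) / 2) := by
        rw [e2]
        exact Real.rpow_le_rpow (Real.rpow_nonneg hx 2) h2S (by linarith)
      rw [e1]
      exact mul_le_mul_of_nonneg_left e3 hx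
    calc ∑ t ∈ Finset.Icc 1 n, x t ^ p
        ≤ ∑ t ∈ Finset.Icc 1 n, x t * (2 * S) ^ ((p - 1) / 2) :=
          Finset.sum_le_sum hterm
      _ = S * (2 * S) ^ ((p - 1) / 2) := by rw [← Finset.sum_mul, ← hS]
      _ = 2 ^ ((p - 1) / 2) * S ^ ((p + 1) / 2) := by
          rw [Real.mul_rpow (by norm_num) hS0]
          rw [show S * (2 ^ ((p-1)/2) * S ^ ((p-1)/2)) =
            2 ^ ((p-1)/2) * (S ^ (1:ℝ) * S ^ ((p-1)/2)) by rw [Real.rpow_one]; ring]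
          rw [← Real.rpow_add' hS0 (by intro h; nlinarith)]
          congr 1; ring
  have hB2 : (0:ℝ) ≤ 2 ^ ((p - 1) / 2) := Real.rpow_nonneg (by norm_num) _
  have hBS : (0:ℝ) ≤ S ^ ((p + 1) / 2) := Real.rpow_nonneg hS0 _
  calc D = (D ^ p) ^ (1 / p) := by
        rw [← Real.rpow_mul hD0, mul_one_div, div_self hp0.ne', Real.rpow_one]
    _ ≤ (2 ^ ((p - 1) / 2) * S ^ ((p + 1) / 2)) ^ (1 / p) :=
        Real.rpow_le_rpow (Real.rpow_nonneg hD0 p) hbound (by positivity)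
    _ = 2 ^ ((p - 1) / (2 * p)) * S ^ ((p + 1) / (2 * p)) := by
        rw [Real.mul_rpow hB2 hBS, ← Real.rpow_mul (by norm_num : (0:ℝ) ≤ 2),
          ← Real.rpow_mul hS0]
        congr 1 <;> · congr 1; ring
end

section
/- Let x₁, …, x_n be nonnegative reals with x₁ = 0 and |x_i - x_{i+1}| ≤ 1 for all i < n. Let y_n = max_i x_i. Then Σ_{t=1}^n x_t ≥ y_n² / 2. -/
lemma aux_sum_max (m : ℕ) : ∀ y : ℝ, 0 ≤ y → y ≤ m →
    y ^ 2 / 2 ≤ ∑ k ∈ Finset.range m, max 0 (y - k) := by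
  induction m with
  | zero =>
    intro y hy0 hym
    simp only [Nat.cast_zero] at hym
    have : y = 0 := le_antisymm hym hy0
    simp [this]
  | succ m ih =>
    intro y hy0 hym
    rw [Finset.sum_range_succ']
    have h0 : max 0 y = y := max_eq_right hy0
    by_cases hc : y ≤ 1
    · have hnn : ∀ k ∈ Finset.range m, (0:ℝ) ≤ max 0 (y - (k+1 : ℕ)) := by
        intro k _; exact le_max_left _ _
      have h2 := Finset.sum_nonneg hnn
      simp only [Nat.cast_zero, sub_zero, h0]
      nlinarith [h2]
    · push_neg at hc
      have ih' := ih (y - 1) (by linarith) (by push_cast at hym ⊢; linarith)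
      have heq : ∑ k ∈ Finset.range m, max 0 (y - (k+1 : ℕ)) =
          ∑ k ∈ Finset.range m, max 0 ((y - 1) - k) := by
        apply Finset.sum_congr rfl
        intro k _; push_cast; ring_nf
      rw [heq]
      simp only [Nat.cast_zero, sub_zero, h0]
      nlinarith [ih']

theorem sum_ge_max_sq_div_two (n : ℕ) (x : ℕ → ℝ)
    (hx0 : ∀ i ∈ Finset.Icc 1 n, 0 ≤ x i)
    (hx1 : x 1 = 0)
    (hstep : ∀ i, 1 ≤ i → i < n → |x i - x (i + 1)| ≤ 1)
    (y : ℝ) (hy : IsGreatest (x '' (Set.Icc 1 n)) y) :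
    ∑ t ∈ Finset.Icc 1 n, x t ≥ y ^ 2 / 2 := by
  obtain ⟨m, hm, hxm⟩ := hy.1
  obtain ⟨hm1, hmn⟩ := hm
  have hy0 : 0 ≤ y := by
    rw [← hxm]; exact hx0 m (Finset.mem_Icc.mpr ⟨hm1, hmn⟩)
  -- key claim
  have hkey : ∀ j, j ≤ m - 1 → y - j ≤ x (m - j) := by
    intro j
    induction j with
    | zero => intro _; simp [hxm]
    | succ j ihj =>
      intro hj
      have hj' : j ≤ m - 1 := by omega
      have ih := ihj hj'
      have h1 : 1 ≤ m - (j+1) := by omega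
      have h2 : m - (j+1) < n := by omega
      have hs := hstep (m - (j+1)) h1 h2
      have he : m - (j+1) + 1 = m - j := by omega
      rw [he] at hs
      have := abs_le.mp hs
      push_cast
      have := this.1
      push_cast at ih
      linarith
  have hym : y ≤ m := by
    have := hkey (m - 1) le_rfl
    have he : m - (m - 1) = 1 := by omega
    rw [he, hx1] at this
    have : y ≤ ((m - 1 : ℕ) : ℝ) := by linarith
    calc y ≤ ((m - 1 : ℕ) : ℝ) := this
      _ ≤ m := by exact_mod_cast Nat.sub_le m 1
  -- lower bound each x t for t ∈ Icc 1 m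
  have hle : ∀ t ∈ Finset.Icc 1 m, max 0 (y - ((m - t : ℕ) : ℝ)) ≤ x t := by
    intro t ht
    obtain ⟨ht1, htm⟩ := Finset.mem_Icc.mp ht
    apply max_le
    · exact hx0 t (Finset.mem_Icc.mpr ⟨ht1, le_trans htm hmn⟩)
    · have := hkey (m - t) (by omega)
      have he : m - (m - t) = t := by omega
      rwa [he] at this
  have hsum1 : ∑ t ∈ Finset.Icc 1 m, max 0 (y - ((m - t : ℕ) : ℝ))
      ≤ ∑ t ∈ Finset.Icc 1 m, x t := Finset.sum_le_sum hle
  have hsum2 : ∑ t ∈ Finset.Icc 1 m, x t ≤ ∑ t ∈ Finset.Icc 1 n, x t := by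
    apply Finset.sum_le_sum_of_subset_of_nonneg
    · exact Finset.Icc_subset_Icc_right hmn
    · intro i hi _; exact hx0 i hi
  -- reindex
  have hre : ∑ t ∈ Finset.Icc 1 m, max 0 (y - ((m - t : ℕ) : ℝ))
      = ∑ k ∈ Finset.range m, max 0 (y - k) := by
    rw [← Finset.Ico_add_one_right_eq_Icc, Finset.sum_Ico_eq_sum_range]
    simp only [Nat.add_sub_cancel, Nat.succ_sub_one]
    rw [← Finset.sum_range_reflect (fun k => max 0 (y - (k : ℝ))) m]
    apply Finset.sum_congr rfl
    intro i hi
    have : m - (1 + i) = m - 1 - i := by omega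
    rw [this]
  have := aux_sum_max m y hy0 hym
  rw [← hre] at this
  linarith
end

section
/- Let a, b, X be nonnegative real numbers and d ≥ 1 a real number such that X^d ≤ a + b·X^(d-1). Then X^d ≤ (a^(1/d) + b)^d ≤ 2^(d-1)·a + 2^(d-1)·b^d. -/
lemma aux_two_pow (x y p : ℝ) (hx : 0 ≤ x) (hy : 0 ≤ y) (hp : 1 ≤ p) :
    (x + y) ^ p ≤ 2 ^ (p - 1) * x ^ p + 2 ^ (p - 1) * y ^ p := by
  lift x to NNReal using hx
  lift y to NNReal using hy
  have h := NNReal.coe_le_coe.2 (NNReal.rpow_add_le_mul_rpow_add_rpow x y hp)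
  push_cast at h
  linarith

theorem self_bounding (a b X d : ℝ)
    (ha : 0 ≤ a) (hb : 0 ≤ b) (hX : 0 ≤ X) (hd : 1 ≤ d)
    (h : X ^ d ≤ a + b * X ^ (d - 1)) :
    X ^ d ≤ (a ^ (1 / d) + b) ^ d ∧
    (a ^ (1 / d) + b) ^ d ≤ 2 ^ (d - 1) * a + 2 ^ (d - 1) * b ^ d := by
  have hdpos : 0 < d := lt_of_lt_of_le one_pos hd
  have had : 0 ≤ a ^ (1 / d) := Real.rpow_nonneg ha _
  have hadd : (a ^ (1 / d)) ^ d = a := by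
    rw [← Real.rpow_mul ha, one_div_mul_cancel hdpos.ne', Real.rpow_one]
  have key : X ≤ a ^ (1 / d) + b := by
    by_contra hlt
    push_neg at hlt
    have hXpos : 0 < X := lt_of_le_of_lt (by positivity) hlt
    have hXb : b < X := lt_of_le_of_lt (le_add_of_nonneg_left had) hlt
    have hXad : a ^ (1 / d) < X - b := by linarith
    have hsplit : X ^ (d - 1) * X = X ^ d := by
      rw [← Real.rpow_add_one hXpos.ne', sub_add_cancel]
    have hbound : X ^ (d - 1) * (X - b) ≤ a := by nlinarith [h, hsplit]
    have hXd1pos : 0 < X ^ (d - 1) := Real.rpow_pos_of_pos hXpos _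
    rcases eq_or_lt_of_le ha with rfl | hapos
    · have h0 : (0:ℝ) ^ (1 / d) = 0 := Real.zero_rpow (by positivity)
      rw [h0] at hXad
      nlinarith
    · have hadpos : 0 < a ^ (1 / d) := Real.rpow_pos_of_pos hapos _
      have h1 : (a ^ (1 / d)) ^ (d - 1) ≤ X ^ (d - 1) :=
        Real.rpow_le_rpow had (by linarith) (by linarith)
      have h2 : (a ^ (1 / d)) ^ (d - 1) * a ^ (1 / d) = a := by
        rw [← Real.rpow_add_one hadpos.ne', sub_add_cancel, hadd]
      have h3 : 0 < (a ^ (1 / d)) ^ (d - 1) := Real.rpow_pos_of_pos hadpos _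
      nlinarith
  refine ⟨Real.rpow_le_rpow hX key hdpos.le, ?_⟩
  calc (a ^ (1 / d) + b) ^ d ≤ 2 ^ (d - 1) * (a ^ (1 / d)) ^ d + 2 ^ (d - 1) * b ^ d :=
        aux_two_pow _ _ _ had hb hd
    _ = 2 ^ (d - 1) * a + 2 ^ (d - 1) * b ^ d := by rw [hadd]
end
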